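/- arXiv:2104.13793 — 2 statements merged into one kernel-verified Lean document; each statement's English description precedes it below -/
import Mathlib

section
/- For every hypergraph H and every k ≥ 1: if H has a hypertree decomposition of width ≤ k, then Algorithm log-k returns true; equivalently (completeness of the Decomp function on induced subhypergraphs): for every D-induced extended subhypergraph (E', Sp, Con) of H arising from a normal-form HD D of width ≤ k, there exists an HD of width ≤ k of (E', Sp, Con) in which some node is a balanced separator. -/
/-!
Restricting a normal-form HD to the subtree `S` plus its boundary nodes `B`, whose bags become
special edges at leaves, gives an HD of `(cov(S), χ(B), Con)` of the same width. Condition (5) is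
where normal form enters: no inner node `u` of `S` can have `⋃λ(u) = χ(b)` with `b ≠ u`. Since
connectedness makes the first covering node of each edge unique, the edges covered inside and
outside any subtree partition `E' ∪ Sp`, and a minimality argument produces a balanced separator.
-/

open scoped Classical

/-- A hypergraph: a finite set of nonempty hyperedges over vertex type `V`. -/
structure FinHypergraph (V : Type) [DecidableEq V] where
  edges : Finset (Finset V)
  edge_nonempty : ∀ e ∈ edges, e.Nonempty

/-- The vertex set of a hypergraph: the union of its edges. -/
noncomputable def FinHypergraph.verts {V : Type} [DecidableEq V] (H : FinHypergraph V) :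
    Finset V := H.edges.sup id

/-- An extended subhypergraph `(E', Sp, Con)` of a hypergraph `H`. -/
structure ExtSubHG {V : Type} [DecidableEq V] (H : FinHypergraph V) where
  E : Finset (Finset V)
  Sp : Finset (Finset V)
  Con : Finset V
  E_subset : E ⊆ H.edges
  Sp_subset : ∀ s ∈ Sp, s ⊆ H.verts
  Con_subset : Con ⊆ H.verts

/-- The vertices of an extended subhypergraph: `V(H') = ⋃E' ∪ ⋃Sp`. -/
noncomputable def ExtSubHG.verts {V : Type} [DecidableEq V] {H : FinHypergraph V}
    (H' : ExtSubHG H) : Finset V := (H'.E ∪ H'.Sp).sup id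

/-- A finite rooted tree, given by a parent function from which the root is reachable. -/
structure RTree (α : Type) where
  root : α
  parent : α → α
  parent_root : parent root = root
  reaches_root : ∀ u, ∃ k, parent^[k] u = root

namespace RTree

variable {α : Type}

/-- `u` is an ancestor of `w` (possibly `u = w`). -/
def isAnc (T : RTree α) (u w : α) : Prop := ∃ k, T.parent^[k] w = u

/-- `u` is a proper ancestor of `w`. -/
def properAnc (T : RTree α) (u w : α) : Prop := T.isAnc u w ∧ u ≠ w

/-- `c` is a child of `u`. -/
def isChild (T : RTree α) (c u : α) : Prop := T.parent c = u ∧ c ≠ u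

/-- The subtree `T_u` rooted at `u`: all descendants of `u` (including `u`). -/
noncomputable def subtree (T : RTree α) [Fintype α] (u : α) : Finset α :=
  Finset.univ.filter (fun w => T.isAnc u w)

/-- The part of the tree strictly above `u`: all nodes outside the subtree `T_u`. -/
noncomputable def outside (T : RTree α) [Fintype α] (u : α) : Finset α :=
  Finset.univ.filter (fun w => ¬ T.isAnc u w)

/-- `x` lies on the (unique) path between `u` and `w` in the tree `T`. -/
def onPath (T : RTree α) (u w x : α) : Prop :=
  (T.isAnc x u ∨ T.isAnc x w) ∧ ∀ a, T.isAnc a u → T.isAnc a w → T.isAnc a x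

/-- A set of nodes is connected in `T` if it is closed under taking paths. -/
def connectedIn (T : RTree α) (S : Set α) : Prop :=
  ∀ u ∈ S, ∀ w ∈ S, ∀ x, T.onPath u w x → x ∈ S

/-- `u` is a leaf of `T`. -/
def isLeaf (T : RTree α) (u : α) : Prop := ∀ c, ¬ T.isChild c u

end RTree

/-- `[U]`-adjacency on a set `F` of (possibly special) edges:
`f` and `g` are adjacent iff they share a vertex outside `U`. -/
def UAdj {V : Type} [DecidableEq V] (F : Finset (Finset V)) (U : Finset V)
    (f g : Finset V) : Prop :=
  f ∈ F ∧ g ∈ F ∧ ((f ∩ g) \ U).Nonempty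

/-- `[U]`-connectedness: the transitive closure of `[U]`-adjacency (note that this
relation is reflexive exactly on the edges `f ∈ F` with `f \ U ≠ ∅`). -/
def UConn {V : Type} [DecidableEq V] (F : Finset (Finset V)) (U : Finset V)
    (f g : Finset V) : Prop :=
  Relation.TransGen (UAdj F U) f g

/-- A `[U]`-component of `F`: a maximally `[U]`-connected subset of `F`. -/
def IsUComponent {V : Type} [DecidableEq V] (F : Finset (Finset V)) (U : Finset V)
    (C : Finset (Finset V)) : Prop :=
  C ⊆ F ∧ C.Nonempty ∧ (∀ f ∈ C, ∀ g ∈ C, UConn F U f g) ∧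
  ∀ C', C ⊂ C' → C' ⊆ F → ∃ f ∈ C', ∃ g ∈ C', ¬ UConn F U f g

/-- Conditions (1)–(6): `(T, χ, lam)` is a hypertree decomposition of the extended
subhypergraph `(E', Sp, Con)` of the hypergraph `H`. -/
structure IsHD {V α : Type} [DecidableEq V] (H : FinHypergraph V)
    (E' Sp : Finset (Finset V)) (Con : Finset V)
    (T : RTree α) (χ : α → Finset V) (lam : α → Finset (Finset V)) : Prop where
  cond1 : ∀ u, (lam u ⊆ H.edges ∧ χ u ⊆ (lam u).sup id) ∨
    (∃ s ∈ Sp, lam u = {s} ∧ χ u = s)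
  cond2E : ∀ f ∈ E', ∃ u, f ⊆ χ u
  cond2Sp : ∀ f ∈ Sp, ∃ u, lam u = {f} ∧ χ u = f
  cond3 : ∀ v ∈ (E' ∪ Sp).sup id, T.connectedIn {u | v ∈ χ u}
  cond4 : ∀ u w, T.isAnc u w → χ w ∩ (lam u).sup id ⊆ χ u
  cond5 : ∀ u, (∃ s ∈ Sp, lam u = {s}) → T.isLeaf u
  cond6 : Con ⊆ χ T.root

/-- A classical hypertree decomposition of a hypergraph `H`
(Gottlob–Leone–Scarcello, conditions (1)–(4)). -/
structure IsClassicalHD {V α : Type} [DecidableEq V] (H : FinHypergraph V)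
    (T : RTree α) (χ : α → Finset V) (lam : α → Finset (Finset V)) : Prop where
  cover : ∀ e ∈ H.edges, ∃ u, e ⊆ χ u
  conn : ∀ v ∈ H.verts, T.connectedIn {u | v ∈ χ u}
  lam_edges : ∀ u, lam u ⊆ H.edges
  chi_sub_lam : ∀ u, χ u ⊆ (lam u).sup id
  special : ∀ u w, T.isAnc u w → χ w ∩ (lam u).sup id ⊆ χ u

/-- `cov(u)`: the (special) edges of `E' ∪ Sp` covered for the first time at node `u`. -/
noncomputable def covAt {V α : Type} [DecidableEq V] (T : RTree α)
    (χ : α → Finset V) (E' Sp : Finset (Finset V)) (u : α) : Finset (Finset V) :=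
  (E' ∪ Sp).filter (fun f => f ⊆ χ u ∧ ∀ u', T.properAnc u' u → ¬ f ⊆ χ u')

/-- `cov(T')` for a set of nodes `T'`. -/
noncomputable def covTree {V α : Type} [DecidableEq V] (T : RTree α)
    (χ : α → Finset V) (E' Sp : Finset (Finset V)) (S : Finset α) :
    Finset (Finset V) :=
  S.biUnion (covAt T χ E' Sp)

/-- Node `u` is a balanced separator of the decomposition `(T, χ)` of `(E', Sp, _)`:
every child subtree covers at most `(|E'| + |Sp|)/2` (special) edges, and the part of
the tree above `u` covers strictly fewer than `(|E'| + |Sp|)/2` (special) edges. -/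
noncomputable def IsBalancedSep {V α : Type} [DecidableEq V] [Fintype α]
    (T : RTree α) (χ : α → Finset V) (E' Sp : Finset (Finset V)) (u : α) : Prop :=
  (∀ c, T.isChild c u →
      2 * (covTree T χ E' Sp (T.subtree c)).card ≤ E'.card + Sp.card) ∧
  2 * (covTree T χ E' Sp (T.outside u)).card < E'.card + Sp.card

/-- The normal form of HDs of extended subhypergraphs (Definition: for every parent `p`
with child `c`, (1) `cov(T_c)` is a `[χ(p)]`-component; (2) some edge of it is covered
at `c`; (3) `χ(c) = ⋃λ(c) ∩ ⋃cov(T_c)`). -/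
noncomputable def IsNormalForm {V α : Type} [DecidableEq V] [Fintype α]
    (E' Sp : Finset (Finset V))
    (T : RTree α) (χ : α → Finset V) (lam : α → Finset (Finset V)) : Prop :=
  ∀ p c, T.isChild c p →
    IsUComponent (E' ∪ Sp) (χ p) (covTree T χ E' Sp (T.subtree c)) ∧
    (∃ f ∈ covTree T χ E' Sp (T.subtree c), f ⊆ χ c) ∧
    χ c = (lam c).sup id ∩ (covTree T χ E' Sp (T.subtree c)).sup id

namespace RTree

variable {α β : Type} (T : RTree α)

theorem isAnc_refl (u : α) : T.isAnc u u := ⟨0, rfl⟩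

variable {T}

theorem isAnc_trans {a b c : α} (hab : T.isAnc a b) (hbc : T.isAnc b c) : T.isAnc a c := by
  obtain ⟨i, rfl⟩ := hab
  obtain ⟨j, rfl⟩ := hbc
  exact ⟨i + j, Function.iterate_add_apply _ _ _ _⟩

theorem isAnc_parent (u : α) : T.isAnc (T.parent u) u := ⟨1, rfl⟩

theorem isAnc_root (u : α) : T.isAnc T.root u := T.reaches_root u

theorem parent_iterate_root (k : ℕ) : T.parent^[k] T.root = T.root :=
  Function.iterate_fixed T.parent_root k

theorem eq_root_of_isPeriodicPt {n : ℕ} {x : α} (hx : Function.IsPeriodicPt T.parent n x)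
    (hn : 0 < n) : x = T.root := by
  obtain ⟨m, hm⟩ := T.reaches_root x
  have hle : m ≤ n * m := Nat.le_mul_of_pos_left m hn
  calc x = T.parent^[n * m] x := (hx.mul_const m).eq.symm
    _ = T.parent^[n * m - m] (T.parent^[m] x) := by
      rw [← Function.iterate_add_apply, Nat.sub_add_cancel hle]
    _ = T.root := by rw [hm, parent_iterate_root]

theorem eq_root_of_parent_eq {u : α} (h : T.parent u = u) : u = T.root :=
  eq_root_of_isPeriodicPt (n := 1) h one_pos

theorem isAnc_antisymm {a b : α} (hab : T.isAnc a b) (hba : T.isAnc b a) : a = b := by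
  obtain ⟨i, rfl⟩ := hab
  obtain ⟨j, hj⟩ := hba
  rcases Nat.eq_zero_or_pos (j + i) with h0 | hpos
  · rw [Nat.eq_zero_of_add_eq_zero_left h0, Function.iterate_zero_apply]
  · have hb : b = T.root :=
      eq_root_of_isPeriodicPt (by rwa [Function.IsPeriodicPt, Function.IsFixedPt,
        Function.iterate_add_apply]) hpos
    rw [hb, parent_iterate_root]

theorem eq_root_of_isAnc_root {u : α} (h : T.isAnc u T.root) : u = T.root :=
  isAnc_antisymm h (isAnc_root u)

theorem isChild_parent {u : α} (hu : u ≠ T.root) : T.isChild u (T.parent u) :=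
  ⟨rfl, fun h => hu (eq_root_of_parent_eq h.symm)⟩

theorem properAnc_of_isChild {c u : α} (h : T.isChild c u) : T.properAnc u c :=
  ⟨h.1 ▸ isAnc_parent c, h.2.symm⟩

theorem onPath_of_isAnc {u w x : α} (hux : T.isAnc u x) (hxw : T.isAnc x w) :
    T.onPath u w x :=
  ⟨Or.inr hxw, fun _ hau _ => isAnc_trans hau hux⟩

theorem exists_onPath_isAnc (u w : α) :
    ∃ m, T.isAnc m u ∧ T.isAnc m w ∧ T.onPath u w m := by
  classical
  have hex : ∃ k, T.isAnc (T.parent^[k] u) w := by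
    obtain ⟨k, hk⟩ := T.reaches_root u
    exact ⟨k, hk ▸ isAnc_root w⟩
  refine ⟨_, ⟨Nat.find hex, rfl⟩, Nat.find_spec hex, Or.inl ⟨Nat.find hex, rfl⟩, ?_⟩
  rintro a ⟨i, rfl⟩ haw
  refine ⟨i - Nat.find hex, ?_⟩
  rw [← Function.iterate_add_apply, Nat.sub_add_cancel (Nat.find_min' hex haw)]

theorem mem_subtree {u w : α} [Fintype α] : w ∈ T.subtree u ↔ T.isAnc u w := by
  simp [subtree]

theorem subtree_subset_subtree [Fintype α] {u w : α} (h : T.isAnc u w) :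
    T.subtree w ⊆ T.subtree u :=
  fun _ hx => mem_subtree.2 (isAnc_trans h (mem_subtree.1 hx))

theorem subtree_ssubset_subtree [Fintype α] {u w : α} (h : T.properAnc u w) :
    T.subtree w ⊂ T.subtree u := by
  refine Finset.ssubset_iff_subset_ne.2 ⟨subtree_subset_subtree h.1, fun heq => h.2 ?_⟩
  have hu : u ∈ T.subtree w := heq ▸ mem_subtree.2 (isAnc_refl T u)
  exact isAnc_antisymm h.1 (mem_subtree.1 hu)

theorem outside_eq_compl [Fintype α] (u : α) : T.outside u = (T.subtree u)ᶜ := by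
  ext w
  simp [outside, subtree]

theorem outside_root [Fintype α] : T.outside T.root = ∅ := by
  simp [outside, isAnc_root]

theorem connectedIn_comap {T' : RTree β} (g : β → α)
    (hg : ∀ a b, T'.isAnc a b ↔ T.isAnc (g a) (g b))
    (hup : ∀ a b, T.isAnc a (g b) → a ∈ Set.range g ∨ T.isAnc a (g T'.root))
    {s : Set α} (hs : T.connectedIn s) : T'.connectedIn (g ⁻¹' s) := by
  intro u hu w hw x ⟨hxuw, hlow⟩
  refine hs _ hu _ hw _ ⟨(hxuw.imp (hg x u).1 (hg x w).1), fun a hau haw => ?_⟩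
  rcases hup a u hau with ⟨a, rfl⟩ | haroot
  · exact (hg a x).1 (hlow a ((hg a u).2 hau) ((hg a w).2 haw))
  · exact isAnc_trans haroot ((hg _ x).1 (isAnc_root x))

def map (T : RTree α) (e : α ≃ β) : RTree β where
  root := e T.root
  parent := e ∘ T.parent ∘ e.symm
  parent_root := by simp [T.parent_root]
  reaches_root u := by
    obtain ⟨k, hk⟩ := T.reaches_root (e.symm u)
    refine ⟨k, ?_⟩
    have hconj : Function.Semiconj e T.parent (e ∘ T.parent ∘ e.symm) := fun x => by simp
    rw [← e.apply_symm_apply u, ← hconj.iterate_right k, hk]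

theorem map_parent (e : α ≃ β) (u : β) : (T.map e).parent u = e (T.parent (e.symm u)) := rfl

theorem isAnc_map_iff (e : α ≃ β) {a b : β} :
    (T.map e).isAnc a b ↔ T.isAnc (e.symm a) (e.symm b) := by
  have hconj : Function.Semiconj e.symm (T.map e).parent T.parent := fun x => by
    simp [map_parent]
  refine exists_congr fun k => ?_
  rw [← hconj.iterate_right k, e.symm.apply_eq_iff_eq]

theorem isLeaf_map (e : α ≃ β) {u : β} (h : T.isLeaf (e.symm u)) : (T.map e).isLeaf u := by
  rintro c ⟨hcu, hne⟩
  refine h (e.symm c) ⟨?_, fun h' => hne (e.symm.injective h')⟩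
  rw [← hcu, map_parent, e.symm_apply_apply]

theorem connectedIn_map (e : α ≃ β) {s : Set α} (hs : T.connectedIn s) :
    (T.map e).connectedIn (e.symm ⁻¹' s) :=
  connectedIn_comap e.symm (fun _ _ => isAnc_map_iff e)
    (fun a _ _ => Or.inl (e.symm.surjective a)) hs

structure IsSubtreeAt (T : RTree α) (N : Finset α) (r : α) : Prop where
  root_mem : r ∈ N
  parent_mem : ∀ a ∈ N, a ≠ r → T.parent a ∈ N
  isAnc_of_mem : ∀ a ∈ N, T.isAnc r a

namespace IsSubtreeAt

variable {N : Finset α} {r : α}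

theorem mem_or_isAnc_root (hN : T.IsSubtreeAt N r) {a b : α} (hb : b ∈ N) (h : T.isAnc a b) :
    a ∈ N ∨ T.isAnc a r := by
  obtain ⟨k, rfl⟩ := h
  induction k generalizing b with
  | zero => exact Or.inl hb
  | succ k ih =>
    by_cases hbr : b = r
    · exact Or.inr ⟨k + 1, hbr ▸ rfl⟩
    · exact ih (hN.parent_mem b hb hbr)

theorem ne_root_of_mem (hN : T.IsSubtreeAt N r) (hr : r ≠ T.root) {u : α} (hu : u ∈ N) :
    u ≠ T.root := by
  rintro rfl
  exact hr (eq_root_of_isAnc_root (hN.isAnc_of_mem _ hu))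

variable (hN : T.IsSubtreeAt N r)

noncomputable def tree : RTree N where
  root := ⟨r, hN.root_mem⟩
  parent a := if h : a.1 = r then ⟨r, hN.root_mem⟩ else ⟨T.parent a, hN.parent_mem a a.2 h⟩
  parent_root := by simp
  reaches_root a := by
    obtain ⟨k, hk⟩ := hN.isAnc_of_mem a a.2
    induction k generalizing a with
    | zero => exact ⟨0, Subtype.ext hk⟩
    | succ k ih =>
      by_cases har : a.1 = r
      · exact ⟨0, Subtype.ext har⟩
      · obtain ⟨j, hj⟩ := ih ⟨T.parent a, hN.parent_mem a a.2 har⟩ hk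
        exact ⟨j + 1, by rw [Function.iterate_succ_apply, dif_neg har, hj]⟩

theorem tree_root : hN.tree.root = ⟨r, hN.root_mem⟩ := rfl

theorem tree_parent_of_eq {a : N} (h : a.1 = r) : hN.tree.parent a = hN.tree.root := dif_pos h

theorem tree_parent_of_ne {a : N} (h : a.1 ≠ r) : (hN.tree.parent a).1 = T.parent a :=
  congrArg Subtype.val (dif_neg h)

theorem isAnc_of_isAnc_tree {a b : N} (h : hN.tree.isAnc a b) : T.isAnc a b := by
  obtain ⟨k, rfl⟩ := h
  induction k with
  | zero => exact isAnc_refl T _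
  | succ k ih =>
    rw [Function.iterate_succ_apply']
    refine isAnc_trans ?_ ih
    by_cases hr : (hN.tree.parent^[k] b).1 = r
    · rw [hN.tree_parent_of_eq hr, tree_root]
      exact ⟨0, hr⟩
    · rw [hN.tree_parent_of_ne hr]
      exact isAnc_parent _

theorem isAnc_tree_of_isAnc {a b : N} (h : T.isAnc a b) : hN.tree.isAnc a b := by
  obtain ⟨k, hk⟩ := h
  induction k generalizing b with
  | zero => exact ⟨0, Subtype.ext hk⟩
  | succ k ih =>
    by_cases hbr : b.1 = r
    · have hrb : T.isAnc a r := ⟨k + 1, hbr ▸ hk⟩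
      have har : a = b := Subtype.ext
        ((isAnc_antisymm hrb (hN.isAnc_of_mem a a.2)).trans hbr.symm)
      exact har ▸ isAnc_refl _ a
    · obtain ⟨j, hj⟩ := ih (b := ⟨T.parent b, hN.parent_mem b b.2 hbr⟩) hk
      have hpb : hN.tree.parent b = ⟨T.parent b, hN.parent_mem b b.2 hbr⟩ :=
        Subtype.ext (hN.tree_parent_of_ne hbr)
      exact ⟨j + 1, by rw [Function.iterate_succ_apply, hpb, hj]⟩

theorem isAnc_tree_iff {a b : N} : hN.tree.isAnc a b ↔ T.isAnc a b :=
  ⟨hN.isAnc_of_isAnc_tree, hN.isAnc_tree_of_isAnc⟩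

theorem connectedIn_tree {s : Set α} (hs : T.connectedIn s) :
    hN.tree.connectedIn (Subtype.val ⁻¹' s) :=
  connectedIn_comap Subtype.val (fun _ _ => hN.isAnc_tree_iff)
    (fun a b hab => (hN.mem_or_isAnc_root b.2 hab).imp (fun ha => ⟨⟨a, ha⟩, rfl⟩) id) hs

end IsSubtreeAt

end RTree

section Cover

variable {V α : Type} [DecidableEq V] {T : RTree α} {χ : α → Finset V}
  {E' Sp : Finset (Finset V)} {f : Finset V}

theorem mem_covAt_iff {u : α} :
    f ∈ covAt T χ E' Sp u ↔
      f ∈ E' ∪ Sp ∧ f ⊆ χ u ∧ ∀ u', T.properAnc u' u → ¬ f ⊆ χ u' := by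
  simp [covAt]

theorem mem_covTree_iff {X : Finset α} :
    f ∈ covTree T χ E' Sp X ↔ ∃ t ∈ X, f ∈ covAt T χ E' Sp t := by
  simp [covTree]

theorem covTree_subset (X : Finset α) : covTree T χ E' Sp X ⊆ E' ∪ Sp := fun _ hf =>
  have ⟨_, _, ht⟩ := mem_covTree_iff.1 hf
  (mem_covAt_iff.1 ht).1

theorem eq_of_mem_covAt_of_subset {u t : α} (h : f ∈ covAt T χ E' Sp t) (hut : T.isAnc u t)
    (hfu : f ⊆ χ u) : u = t :=
  by_contra fun hne => (mem_covAt_iff.1 h).2.2 u ⟨hut, hne⟩ hfu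

theorem eq_of_mem_covAt (hconn : ∀ v ∈ (E' ∪ Sp).sup id, T.connectedIn {u | v ∈ χ u})
    {t t' : α} (h : f ∈ covAt T χ E' Sp t) (h' : f ∈ covAt T χ E' Sp t') : t = t' := by
  obtain ⟨hfE, hft, -⟩ := mem_covAt_iff.1 h
  have hft' := (mem_covAt_iff.1 h').2.1
  obtain ⟨m, hmt, hmt', hpath⟩ := T.exists_onPath_isAnc t t'
  have hfm : f ⊆ χ m := fun v hv =>
    hconn v (Finset.mem_sup.2 ⟨f, hfE, hv⟩) t (hft hv) t' (hft' hv) m hpath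
  exact (eq_of_mem_covAt_of_subset h hmt hfm).symm.trans (eq_of_mem_covAt_of_subset h' hmt' hfm)

theorem exists_isAnc_mem_covAt [Fintype α] {w : α} (hf : f ∈ E' ∪ Sp) (hw : f ⊆ χ w) :
    ∃ t, T.isAnc t w ∧ f ∈ covAt T χ E' Sp t := by
  obtain ⟨t, ht, hmax⟩ := (Finset.univ.filter fun t => T.isAnc t w ∧ f ⊆ χ t).exists_max_image
    (fun t => (T.subtree t).card) ⟨w, by simp [RTree.isAnc_refl, hw]⟩
  simp only [Finset.mem_filter, Finset.mem_univ, true_and] at ht hmax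
  refine ⟨t, ht.1, mem_covAt_iff.2 ⟨hf, ht.2, fun u hu hfu => ?_⟩⟩
  have hle := hmax u ⟨RTree.isAnc_trans hu.1 ht.1, hfu⟩
  have hlt := Finset.card_lt_card (RTree.subtree_ssubset_subtree hu)
  omega

end Cover

section BalancedSeparator

variable {V α : Type} [DecidableEq V] [Fintype α] {H : FinHypergraph V}
  {E' Sp : Finset (Finset V)} {Con : Finset V} {T : RTree α} {χ : α → Finset V}
  {lam : α → Finset (Finset V)}

theorem IsHD.covTree_univ (hD : IsHD H E' Sp Con T χ lam) :
    covTree T χ E' Sp Finset.univ = E' ∪ Sp := by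
  refine (covTree_subset _).antisymm fun f hf => ?_
  obtain ⟨u, hu⟩ : ∃ u, f ⊆ χ u := by
    rcases Finset.mem_union.1 hf with hE | hSp
    · exact hD.cond2E f hE
    · obtain ⟨u, -, hu⟩ := hD.cond2Sp f hSp
      exact ⟨u, hu.symm.subset⟩
  obtain ⟨t, -, ht⟩ := exists_isAnc_mem_covAt hf hu
  exact mem_covTree_iff.2 ⟨t, Finset.mem_univ t, ht⟩

theorem IsHD.card_covTree_outside_add (hD : IsHD H E' Sp Con T χ lam) (u : α) :
    (covTree T χ E' Sp (T.outside u)).card + (covTree T χ E' Sp (T.subtree u)).card =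
      (E' ∪ Sp).card := by
  have hdisj : Disjoint (covTree T χ E' Sp (T.outside u)) (covTree T χ E' Sp (T.subtree u)) := by
    refine Finset.disjoint_left.2 fun f hout hsub => ?_
    obtain ⟨t, ht, hft⟩ := mem_covTree_iff.1 hout
    obtain ⟨t', ht', hft'⟩ := mem_covTree_iff.1 hsub
    rw [eq_of_mem_covAt hD.cond3 hft hft', RTree.outside_eq_compl] at ht
    exact Finset.mem_compl.1 ht ht'
  rw [← Finset.card_union_of_disjoint hdisj, covTree, covTree, ← Finset.union_biUnion,
    RTree.outside_eq_compl, Finset.union_comm, Finset.union_compl, ← covTree, hD.covTree_univ]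

/-- A node minimising its subtree among those whose outside covers less than half of the
edges is a balanced separator: a heavy child would itself qualify. -/
theorem IsHD.exists_isBalancedSep (hD : IsHD H E' Sp Con T χ lam) (hne : (E' ∪ Sp).Nonempty) :
    ∃ u, IsBalancedSep T χ E' Sp u := by
  have hcard : (E' ∪ Sp).card ≤ E'.card + Sp.card := Finset.card_union_le _ _
  have hpos : 0 < (E' ∪ Sp).card := Finset.card_pos.2 hne
  set A := Finset.univ.filter
    fun u => 2 * (covTree T χ E' Sp (T.outside u)).card < E'.card + Sp.card
  have hroot : T.root ∈ A := Finset.mem_filter.2 ⟨Finset.mem_univ _, by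
    rw [RTree.outside_root, covTree, Finset.biUnion_empty, Finset.card_empty]
    omega⟩
  obtain ⟨u, hu, hmin⟩ := A.exists_min_image (fun u => (T.subtree u).card) ⟨_, hroot⟩
  simp only [A, Finset.mem_filter, Finset.mem_univ, true_and] at hu hmin
  refine ⟨u, fun c hc => ?_, hu⟩
  by_contra hheavy
  have hsplit := hD.card_covTree_outside_add c
  have hle := hmin c (by omega)
  have hlt := Finset.card_lt_card (RTree.subtree_ssubset_subtree (RTree.properAnc_of_isChild hc))
  omega

end BalancedSeparator

section Decomposition

variable {V α β : Type} [DecidableEq V] {H : FinHypergraph V} {E' Sp : Finset (Finset V)}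
  {Con : Finset V} {T : RTree α} {χ : α → Finset V} {lam : α → Finset (Finset V)}

theorem IsHD.map (hD : IsHD H E' Sp Con T χ lam) (e : α ≃ β) :
    IsHD H E' Sp Con (T.map e) (χ ∘ e.symm) (lam ∘ e.symm) where
  cond1 u := hD.cond1 (e.symm u)
  cond2E f hf := let ⟨u, hu⟩ := hD.cond2E f hf; ⟨e u, by simpa using hu⟩
  cond2Sp f hf := let ⟨u, hu⟩ := hD.cond2Sp f hf; ⟨e u, by simpa using hu⟩
  cond3 v hv := RTree.connectedIn_map e (hD.cond3 v hv)
  cond4 _ _ h := hD.cond4 _ _ ((RTree.isAnc_map_iff e).1 h)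
  cond5 _ h := RTree.isLeaf_map e (hD.cond5 _ h)
  cond6 := by simpa [RTree.map] using hD.cond6

theorem IsHD.cond1_of_sp_empty (hD : IsHD H E' ∅ Con T χ lam) (u : α) :
    lam u ⊆ H.edges ∧ χ u ⊆ (lam u).sup id :=
  (hD.cond1 u).resolve_right (by simp)

end Decomposition

section NormalForm

variable {V α : Type} [DecidableEq V] [Fintype α] {H : FinHypergraph V}
  {E' Sp : Finset (Finset V)} {Con : Finset V} {T : RTree α} {χ : α → Finset V}
  {lam : α → Finset (Finset V)}

theorem IsNormalForm.covAt_nonempty (hNF : IsNormalForm E' Sp T χ lam) {c : α}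
    (hc : c ≠ T.root) : (covAt T χ E' Sp c).Nonempty := by
  obtain ⟨-, ⟨f, hf, hfc⟩, -⟩ := hNF _ c (RTree.isChild_parent hc)
  obtain ⟨t, ht, hft⟩ := mem_covTree_iff.1 hf
  exact ⟨f, eq_of_mem_covAt_of_subset hft (RTree.mem_subtree.1 ht) hfc ▸ hft⟩

/-- If `⋃λ(u) = χ(b)`, normal form first forces `u` above `b` (an edge covered below `u`
lies in `χ(b)`), then `χ(u) = χ(b)`, so the edge that normal form requires to be covered
at `b` would already be covered at `u`. -/
theorem IsNormalForm.sup_lam_ne_chi (hNF : IsNormalForm E' Sp T χ lam)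
    (hD : IsHD H E' Sp Con T χ lam) {u b : α} (hu : u ≠ T.root) (hb : b ≠ T.root)
    (hub : u ≠ b) : (lam u).sup id ≠ χ b := by
  intro hlam
  obtain ⟨-, ⟨f, hf, hfu⟩, hχu⟩ := hNF _ u (RTree.isChild_parent hu)
  obtain ⟨-, ⟨g, hg, hgb⟩, hχb⟩ := hNF _ b (RTree.isChild_parent hb)
  have hχub : χ u ⊆ χ b := hχu ▸ hlam ▸ Finset.inter_subset_left
  obtain ⟨t, ht, hft⟩ := mem_covTree_iff.1 hf
  obtain ⟨t', ht', hft'⟩ := exists_isAnc_mem_covAt (covTree_subset _ hf) (hfu.trans hχub)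
  have hub' : T.isAnc u b :=
    RTree.isAnc_trans (RTree.mem_subtree.1 ht) (eq_of_mem_covAt hD.cond3 hft hft' ▸ ht')
  have hχbu : χ b ⊆ χ u := by
    have hcov := Finset.biUnion_subset_biUnion_of_subset_left (covAt T χ E' Sp)
      (RTree.subtree_subset_subtree hub')
    rw [hχu, hlam]
    exact Finset.subset_inter subset_rfl
      ((hχb ▸ Finset.inter_subset_right).trans (Finset.sup_mono hcov))
  obtain ⟨s, hs, hgs⟩ := mem_covTree_iff.1 hg
  have hus : u = s :=
    eq_of_mem_covAt_of_subset hgs (RTree.isAnc_trans hub' (RTree.mem_subtree.1 hs))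
      (hgb.trans hχbu)
  exact hub (RTree.isAnc_antisymm hub' (hus ▸ RTree.mem_subtree.1 hs))

end NormalForm

section Induced

variable {V α : Type}

/-- The labelling `λ'` of the `D`-induced HD; it is only evaluated on `S` and its boundary. -/
noncomputable def inducedLam (S : Finset α) (χ : α → Finset V) (lam : α → Finset (Finset V))
    (u : α) : Finset (Finset V) :=
  if u ∈ S then lam u else {χ u}

theorem card_inducedLam_le {S : Finset α} {χ : α → Finset V} {lam : α → Finset (Finset V)}
    {k : ℕ} (hw : ∀ u, (lam u).card ≤ k) (hk : 1 ≤ k) (u : α) :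
    (inducedLam S χ lam u).card ≤ k := by
  unfold inducedLam
  split_ifs
  exacts [hw u, hk]

variable [DecidableEq V] [Fintype α]

noncomputable def boundary (T : RTree α) (S : Finset α) : Finset α :=
  Finset.univ.filter fun u => u ∉ S ∧ T.parent u ∈ S

variable {T : RTree α} {χ : α → Finset V} {E' Sp : Finset (Finset V)} {S : Finset α} {r : α}

theorem mem_boundary {u : α} : u ∈ boundary T S ↔ u ∉ S ∧ T.parent u ∈ S := by
  simp [boundary]

theorem ne_root_of_mem_boundary {u : α} (hu : u ∈ boundary T S) : u ≠ T.root := by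
  rintro rfl
  exact (mem_boundary.1 hu).1 (T.parent_root ▸ (mem_boundary.1 hu).2)

theorem exists_subset_chi_of_mem_covTree_union {f : Finset V}
    (hf : f ∈ covTree T χ E' Sp S ∪ (boundary T S).image χ) :
    ∃ t ∈ S ∪ boundary T S, f ⊆ χ t := by
  rcases Finset.mem_union.1 hf with hcov | hbd
  · obtain ⟨t, ht, hft⟩ := mem_covTree_iff.1 hcov
    exact ⟨t, Finset.mem_union_left _ ht, (mem_covAt_iff.1 hft).2.1⟩
  · obtain ⟨b, hb, rfl⟩ := Finset.mem_image.1 hbd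
    exact ⟨b, Finset.mem_union_right _ hb, subset_rfl⟩

namespace RTree.IsSubtreeAt

variable (hS : T.IsSubtreeAt S r)
include hS

theorem parent_mem_of_mem_union_boundary {a : α} (ha : a ∈ S ∪ boundary T S) (hne : a ≠ r) :
    T.parent a ∈ S := by
  rcases Finset.mem_union.1 ha with h | h
  · exact hS.parent_mem a h hne
  · exact (mem_boundary.1 h).2

theorem union_boundary : T.IsSubtreeAt (S ∪ boundary T S) r where
  root_mem := Finset.mem_union_left _ hS.root_mem
  parent_mem a ha hne := Finset.mem_union_left _ (hS.parent_mem_of_mem_union_boundary ha hne)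
  isAnc_of_mem a ha := by
    by_cases har : a = r
    · exact har ▸ RTree.isAnc_refl T a
    · exact RTree.isAnc_trans (hS.isAnc_of_mem _ (hS.parent_mem_of_mem_union_boundary ha har))
        (RTree.isAnc_parent a)

end RTree.IsSubtreeAt

end Induced

section InducedHD

variable {V α : Type} [DecidableEq V] [Fintype α] {H : FinHypergraph V} {T : RTree α}
  {χ : α → Finset V} {lam : α → Finset (Finset V)} {S : Finset α} {r : α}

theorem sup_covTree_union_boundary_subset (hD : IsHD H H.edges ∅ ∅ T χ lam) :
    (covTree T χ H.edges ∅ S ∪ (boundary T S).image χ).sup id ⊆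
      (H.edges ∪ ∅ : Finset (Finset V)).sup id := by
  refine Finset.sup_le fun f hf => ?_
  rcases Finset.mem_union.1 hf with hcov | hbd
  · exact Finset.le_sup (f := id) (covTree_subset S hcov)
  · obtain ⟨b, -, rfl⟩ := Finset.mem_image.1 hbd
    obtain ⟨hlam, hχ⟩ := hD.cond1_of_sp_empty b
    rw [Finset.union_empty]
    exact hχ.trans (Finset.sup_mono hlam)

theorem isLeaf_tree_of_mem_boundary (hS : T.IsSubtreeAt S r)
    {a : ↥(S ∪ boundary T S)} (ha : a.1 ∈ boundary T S) : hS.union_boundary.tree.isLeaf a := by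
  rintro c ⟨rfl, -⟩
  refine (mem_boundary.1 ha).1 ?_
  by_cases hcr : c.1 = r
  · rw [hS.union_boundary.tree_parent_of_eq hcr]
    exact hS.root_mem
  · rw [hS.union_boundary.tree_parent_of_ne hcr]
    exact hS.parent_mem_of_mem_union_boundary c.2 hcr

theorem isHD_induced (hD : IsHD H H.edges ∅ ∅ T χ lam) (hNF : IsNormalForm H.edges ∅ T χ lam)
    (hS : T.IsSubtreeAt S r) (hr : r ≠ T.root) :
    IsHD H (covTree T χ H.edges ∅ S) ((boundary T S).image χ)
      ((covTree T χ H.edges ∅ S ∪ (boundary T S).image χ).sup id ∩ (lam (T.parent r)).sup id)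
      hS.union_boundary.tree (fun a => χ a) (fun a => inducedLam S χ lam a) where
  cond1 a := by
    by_cases ha : a.1 ∈ S
    · exact Or.inl (by simpa [inducedLam, ha] using hD.cond1_of_sp_empty a)
    · have hb : a.1 ∈ boundary T S := (Finset.mem_union.1 a.2).resolve_left ha
      exact Or.inr ⟨χ a, Finset.mem_image_of_mem χ hb, by simp [inducedLam, ha], rfl⟩
  cond2E f hf := by
    obtain ⟨t, ht, hft⟩ := mem_covTree_iff.1 hf
    exact ⟨⟨t, Finset.mem_union_left _ ht⟩, (mem_covAt_iff.1 hft).2.1⟩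
  cond2Sp f hf := by
    obtain ⟨b, hb, rfl⟩ := Finset.mem_image.1 hf
    exact ⟨⟨b, Finset.mem_union_right _ hb⟩, by simp [inducedLam, (mem_boundary.1 hb).1], rfl⟩
  cond3 v hv :=
    hS.union_boundary.connectedIn_tree (hD.cond3 v (sup_covTree_union_boundary_subset hD hv))
  cond4 a w haw := by
    by_cases ha : a.1 ∈ S
    · simpa [inducedLam, ha] using hD.cond4 a w (hS.union_boundary.isAnc_tree_iff.1 haw)
    · simp [inducedLam, ha]
  cond5 a := by
    rintro ⟨s, hs, hlam⟩
    obtain ⟨b, hb, rfl⟩ := Finset.mem_image.1 hs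
    by_cases ha : a.1 ∈ S
    · rw [inducedLam, if_pos ha] at hlam
      exact absurd (by simp [hlam]) (hNF.sup_lam_ne_chi hD (hS.ne_root_of_mem hr ha)
        (ne_root_of_mem_boundary hb) fun hab => (mem_boundary.1 hb).1 (hab ▸ ha))
    · exact isLeaf_tree_of_mem_boundary hS ((Finset.mem_union.1 a.2).resolve_left ha)
  cond6 v hv := by
    obtain ⟨hvE, hvp⟩ := Finset.mem_inter.1 hv
    obtain ⟨f, hf, hvf⟩ := Finset.mem_sup.1 hvE
    obtain ⟨t, ht, hft⟩ := exists_subset_chi_of_mem_covTree_union hf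
    have hrt : T.isAnc r t := hS.union_boundary.isAnc_of_mem t ht
    have hvp' : v ∈ χ (T.parent r) := hD.cond4 _ t
      (RTree.isAnc_trans (RTree.isAnc_parent r) hrt) (Finset.mem_inter.2 ⟨hft hvf, hvp⟩)
    exact hD.cond3 v (sup_covTree_union_boundary_subset hD hvE) _ hvp' t (hft hvf) r
      (RTree.onPath_of_isAnc (RTree.isAnc_parent r) hrt)

end InducedHD

/-- completeness on induced subhypergraphs: every `D`-induced extended
subhypergraph of `H` arising from a subtree `S` (with root `r' ≠ root`) of a
normal-form HD `D` of `H` of width `≤ k` admits an HD of width `≤ k` that contains a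
balanced separator node. -/
theorem logk_completeness {V α : Type} [DecidableEq V] [Fintype α]
    (H : FinHypergraph V) (k : ℕ) (hk : 1 ≤ k)
    (T : RTree α) (χ : α → Finset V) (lam : α → Finset (Finset V))
    (hD : IsHD H H.edges ∅ ∅ T χ lam)
    (hNF : IsNormalForm H.edges ∅ T χ lam)
    (hw : ∀ u, (lam u).card ≤ k)
    (S : Finset α) (r' : α)
    (hrS : r' ∈ S) (hanc : ∀ w ∈ S, T.isAnc r' w)
    (hclosed : ∀ w ∈ S, w ≠ r' → T.parent w ∈ S)
    (hr' : r' ≠ T.root) :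
    ∃ (n : ℕ) (T' : RTree (Fin n)) (χ' : Fin n → Finset V)
      (lam' : Fin n → Finset (Finset V)),
      IsHD H (covTree T χ H.edges ∅ S)
        ((Finset.univ.filter (fun u => u ∉ S ∧ T.parent u ∈ S)).image χ)
        (((covTree T χ H.edges ∅ S ∪
            (Finset.univ.filter (fun u => u ∉ S ∧ T.parent u ∈ S)).image χ).sup id) ∩
          (lam (T.parent r')).sup id)
        T' χ' lam' ∧
      (∀ u, (lam' u).card ≤ k) ∧
      ∃ u, IsBalancedSep T' χ' (covTree T χ H.edges ∅ S)
        ((Finset.univ.filter (fun u => u ∉ S ∧ T.parent u ∈ S)).image χ) u := by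
  have hS : T.IsSubtreeAt S r' := ⟨hrS, hclosed, hanc⟩
  let e := Fintype.equivFin ↥(S ∪ boundary T S)
  have hD' := (isHD_induced hD hNF hS hr').map e
  refine ⟨_, _, _, _, hD', fun u => card_inducedLam_le hw hk _, hD'.exists_isBalancedSep ?_⟩
  obtain ⟨f, hf⟩ := hNF.covAt_nonempty hr'
  exact ⟨f, Finset.mem_union_left _ (mem_covTree_iff.2 ⟨r', hrS, hf⟩)⟩
end

section
/- Restriction of the parent search space preserves components: let H' be an extended subhypergraph, λ_p, λ_c edge sets, and comp_low the unique [λ_p]-component of H' with |comp_low| > |H'|/2. Suppose V(comp_low) ∩ ⋃λ_p ⊆ ⋃λ_c and e ∈ λ_p satisfies e ∩ ⋃λ_c = ∅. Then comp_low is also a [λ_p \ {e}]-component of H'. -/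
open scoped Classical

/-!
No edge of `comp_low` meets the vertices that dropping `e` removes from `⋃λ_p`: they lie in
`e ∩ V(comp_low) ∩ ⋃λ_p ⊆ e ∩ ⋃λ_c = ∅`. Hence, starting from `comp_low`, every
`[λ_p \ {e}]`-adjacency is already a `[λ_p]`-adjacency, so `[λ_p \ {e}]`-paths cannot leave the
`[λ_p]`-component `comp_low`; and shrinking the separator only adds adjacencies, so `comp_low`
stays connected.
-/

section Components

variable {V : Type} [DecidableEq V] {F : Finset (Finset V)} {U U' : Finset V}
  {C : Finset (Finset V)} {f g : Finset V}

theorem UAdj.symm (h : UAdj F U f g) : UAdj F U g f :=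
  ⟨h.2.1, h.1, by rw [Finset.inter_comm]; exact h.2.2⟩

instance : Std.Symm (UAdj F U) := ⟨fun _ _ => UAdj.symm⟩

theorem UConn.symm (h : UConn F U f g) : UConn F U g f :=
  Relation.TransGen.stdSymm.symm _ _ h

theorem UConn.mono_sep (hU : U' ⊆ U) (h : UConn F U f g) : UConn F U' f g :=
  Relation.TransGen.mono (fun _ _ hadj => ⟨hadj.1, hadj.2.1,
    hadj.2.2.mono (Finset.sdiff_subset_sdiff le_rfl hU)⟩) f g h

theorem UAdj.of_disjoint_sdiff (hf : Disjoint f (U \ U')) (h : UAdj F U' f g) :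
    UAdj F U f g := by
  obtain ⟨hfF, hgF, v, hv⟩ := h
  rw [Finset.mem_sdiff, Finset.mem_inter] at hv
  refine ⟨hfF, hgF, v, Finset.mem_sdiff.mpr ⟨Finset.mem_inter.mpr hv.1, fun hvU => ?_⟩⟩
  exact Finset.disjoint_left.mp hf hv.1.1 (Finset.mem_sdiff.mpr ⟨hvU, hv.2⟩)

theorem IsUComponent.mem_of_uConn (hC : IsUComponent F U C) (hf : f ∈ C)
    (hfg : UConn F U f g) : g ∈ C := by
  obtain ⟨hCF, -, hconn, hmax⟩ := hC
  by_contra hg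
  have hgF : g ∈ F := by
    obtain ⟨_, _, hadj⟩ := Relation.TransGen.tail'_iff.mp hfg
    exact hadj.2.1
  have hfrom : ∀ x ∈ insert g C, UConn F U f x := by
    intro x hx
    rcases Finset.mem_insert.mp hx with rfl | hx
    · exact hfg
    · exact hconn f hf x hx
  obtain ⟨x, hx, y, hy, hxy⟩ :=
    hmax (insert g C) (Finset.ssubset_insert hg) (Finset.insert_subset hgF hCF)
  exact hxy ((hfrom x hx).symm.trans (hfrom y hy))

theorem IsUComponent.mem_of_uConn_of_disjoint (hC : IsUComponent F U C)
    (hdisj : ∀ f ∈ C, Disjoint f (U \ U')) (hf : f ∈ C) (hfg : UConn F U' f g) : g ∈ C := by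
  induction hfg with
  | single hadj =>
    exact hC.mem_of_uConn hf (.single (hadj.of_disjoint_sdiff (hdisj _ hf)))
  | tail _ hadj ih =>
    exact hC.mem_of_uConn ih (.single (hadj.of_disjoint_sdiff (hdisj _ ih)))

theorem IsUComponent.of_subset_of_disjoint (hC : IsUComponent F U C) (hU : U' ⊆ U)
    (hdisj : ∀ f ∈ C, Disjoint f (U \ U')) : IsUComponent F U' C := by
  refine ⟨hC.1, hC.2.1, fun f hf g hg => (hC.2.2.1 f hf g hg).mono_sep hU, ?_⟩
  intro C' hCC' _
  obtain ⟨f, hf⟩ := hC.2.1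
  obtain ⟨g, hgC', hg⟩ := Finset.exists_of_ssubset hCC'
  exact ⟨f, hCC'.1 hf, g, hgC', fun hfg => hg (hC.mem_of_uConn_of_disjoint hdisj hf hfg)⟩

end Components

theorem Finset.sup_id_sdiff_sup_id_erase_subset {V : Type} [DecidableEq V]
    (s : Finset (Finset V)) (a : Finset V) : s.sup id \ (s.erase a).sup id ⊆ a := by
  intro v hv
  rw [Finset.mem_sdiff, Finset.mem_sup] at hv
  obtain ⟨⟨b, hb, hvb⟩, hv'⟩ := hv
  by_cases hba : b = a
  · exact hba ▸ hvb
  · exact absurd (Finset.mem_sup.mpr ⟨b, Finset.mem_erase.mpr ⟨hba, hb⟩, hvb⟩) hv'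

theorem restrict_parent_search_general {V : Type} [DecidableEq V]
    (H : FinHypergraph V) (H' : ExtSubHG H)
    (lam_p lam_c : Finset (Finset V)) (comp_low : Finset (Finset V)) (e : Finset V)
    (hcomp : IsUComponent (H'.E ∪ H'.Sp) (lam_p.sup id) comp_low)
    (hcover : comp_low.sup id ∩ lam_p.sup id ⊆ lam_c.sup id)
    (hdisj : e ∩ lam_c.sup id = ∅) :
    IsUComponent (H'.E ∪ H'.Sp) ((lam_p.erase e).sup id) comp_low := by
  refine hcomp.of_subset_of_disjoint (Finset.sup_mono (Finset.erase_subset _ _)) ?_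
  intro f hf
  rw [Finset.disjoint_left]
  intro v hvf hv
  have hve : v ∈ e := lam_p.sup_id_sdiff_sup_id_erase_subset e hv
  have hvc : v ∈ lam_c.sup id :=
    hcover (Finset.mem_inter.mpr ⟨Finset.mem_sup.mpr ⟨f, hf, hvf⟩, (Finset.mem_sdiff.mp hv).1⟩)
  simpa [hdisj] using Finset.mem_inter.mpr ⟨hve, hvc⟩

/-- restricting the parent search space preserves components: if
`comp_low` is the unique oversized `[λ_p]`-component, `V(comp_low) ∩ ⋃λ_p ⊆ ⋃λ_c`,
and `e ∈ λ_p` has empty intersection with `⋃λ_c`, then `comp_low` is also a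
`[λ_p \ {e}]`-component. -/
theorem restrict_parent_search {V : Type} [DecidableEq V]
    (H : FinHypergraph V) (H' : ExtSubHG H)
    (lam_p lam_c : Finset (Finset V)) (comp_low : Finset (Finset V)) (e : Finset V)
    (hcomp : IsUComponent (H'.E ∪ H'.Sp) (lam_p.sup id) comp_low)
    (hbig : 2 * comp_low.card > H'.E.card + H'.Sp.card)
    (hcover : comp_low.sup id ∩ lam_p.sup id ⊆ lam_c.sup id)
    (he : e ∈ lam_p) (hdisj : e ∩ lam_c.sup id = ∅) :
    IsUComponent (H'.E ∪ H'.Sp) ((lam_p.erase e).sup id) comp_low :=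
  restrict_parent_search_general H H' lam_p lam_c comp_low e hcomp hcover hdisj
end
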